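/- arXiv:0803.0831 — 4 statements merged into one kernel-verified Lean document; each statement's English description precedes it below -/
import Mathlib

section
/- Let $q = \bar{q}\tilde{q}$ with $(\bar{q},\tilde{q})=1$, let $(a,q)=1$, and write $a = \tilde{a}\bar{q} + \bar{a}\tilde{q}$ with $(\tilde{a},\tilde{q})=1$ and $(\bar{a},\bar{q})=1$. Then the generalized Ramanujan sum satisfies $c_j(a,q) = c_j(\tilde{a},\tilde{q}) \cdot c_j(\bar{a},\bar{q})$. -/
open Finset

/-- `e(x) = e^{2πix}`. -/
noncomputable def e (x : ℂ) : ℂ := Complex.exp (2 * Real.pi * Complex.I * x)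

/-- The generalized Ramanujan sum. -/
noncomputable def ramanujanC (aj : ℤ) (qj : ℕ) (a : ℤ) (q : ℕ) : ℂ :=
  ∑ k ∈ (Finset.Icc 1 q).filter
      (fun k => Nat.Coprime k q ∧ (k : ℤ) % (Nat.gcd qj q : ℤ) = aj % (Nat.gcd qj q : ℤ)),
    e ((a : ℂ) * k / q)

/-! The summand of `c_j(a, q̄q̃)` at `k` is the product of the summands of `c_j(ā, q̄)` and
`c_j(ã, q̃)` at the same `k`: `a / (q̄q̃) = ã / q̃ + ā / q̄`, coprimality to `q̄q̃` is coprimality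
to both factors, and `(q_j, q̄q̃) = (q_j, q̄)(q_j, q̃)` with coprime factors, so the congruence
condition splits as well. The two factors are periodic with periods `q̄` and `q̃`, and by the
Chinese remainder theorem the sum over a period of `q̄q̃` of such a product is the product of
the sums over the two periods. -/

open Function

lemma e_add (x y : ℂ) : e (x + y) = e x * e y := by
  simp only [e, mul_add, Complex.exp_add]

lemma e_intCast (n : ℤ) : e n = 1 := by
  rw [e, mul_comm, Complex.exp_int_mul_two_pi_mul_I]

lemma e_add_intCast (x : ℂ) (n : ℤ) : e (x + n) = e x := by
  rw [e_add, e_intCast, mul_one]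

theorem Function.Periodic.sum_Icc_one_eq_sum_range {M : Type*} [AddCommMonoid M] {f : ℕ → M}
    {q : ℕ} (hf : Periodic f q) : ∑ k ∈ Icc 1 q, f k = ∑ k ∈ range q, f k := by
  rcases q with _ | p
  · simp
  · rw [← Ico_add_one_right_eq_Icc, ← zero_add 1, ← sum_Ico_add', ← range_eq_Ico,
      sum_range_succ, sum_range_succ', ← hf 0, zero_add]

theorem Function.Periodic.sum_range_mul_eq_sum_range_mul_sum_range {R : Type*}
    [NonUnitalNonAssocSemiring R] {f g : ℕ → R} {m n : ℕ} (hf : Periodic f m) (hg : Periodic g n)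
    (hmn : m.Coprime n) :
    ∑ k ∈ range (m * n), f k * g k = (∑ k ∈ range m, f k) * ∑ k ∈ range n, g k := by
  rw [sum_mul_sum, ← sum_product']
  refine sum_nbij' (fun k => (k % m, k % n)) (fun p => Nat.chineseRemainder hmn p.1 p.2)
    ?_ ?_ ?_ ?_ fun k _ => by simp only [hf.map_mod_nat, hg.map_mod_nat]
  · intro k hk
    rw [mem_range] at hk
    exact mem_product.2 ⟨mem_range.2 (Nat.mod_lt _ (Nat.pos_of_lt_mul_right hk)),
      mem_range.2 (Nat.mod_lt _ (Nat.pos_of_lt_mul_left hk))⟩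
  · rintro ⟨x, y⟩ hxy
    obtain ⟨hx, hy⟩ := mem_product.1 hxy
    exact mem_range.2 (Nat.chineseRemainder_lt_mul hmn x y
      (Nat.ne_zero_of_lt (mem_range.1 hx)) (Nat.ne_zero_of_lt (mem_range.1 hy)))
  · intro k hk
    rw [mem_range] at hk
    exact ((Nat.chineseRemainder_modEq_unique hmn (Nat.mod_modEq k m).symm
      (Nat.mod_modEq k n).symm).symm.eq_of_lt_of_lt
      (Nat.chineseRemainder_lt_mul hmn _ _ (Nat.pos_of_lt_mul_right hk).ne'
        (Nat.pos_of_lt_mul_left hk).ne') hk)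
  · rintro ⟨x, y⟩ hxy
    obtain ⟨hx, hy⟩ := mem_product.1 hxy
    obtain ⟨hcx, hcy⟩ := (Nat.chineseRemainder hmn x y).2
    exact Prod.ext (Eq.trans hcx (Nat.mod_eq_of_lt (mem_range.1 hx)))
      (Eq.trans hcy (Nat.mod_eq_of_lt (mem_range.1 hy)))

noncomputable def ramanujanTerm (aj : ℤ) (qj : ℕ) (a : ℤ) (q k : ℕ) : ℂ :=
  if k.Coprime q ∧ (k : ℤ) ≡ aj [ZMOD qj.gcd q] then e (a * k / q) else 0

lemma periodic_ramanujanTerm (aj : ℤ) (qj : ℕ) (a : ℤ) (q : ℕ) :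
    Periodic (ramanujanTerm aj qj a q) q := by
  intro k
  have hcop : (k + q).Coprime q ↔ k.Coprime q := Nat.coprime_add_self_left
  have hcong : ((k + q : ℕ) : ℤ) ≡ aj [ZMOD qj.gcd q] ↔ (k : ℤ) ≡ aj [ZMOD qj.gcd q] := by
    have hshift : ((k + q : ℕ) : ℤ) ≡ k [ZMOD qj.gcd q] := by
      push_cast
      exact Int.add_modEq_right.of_dvd (Int.natCast_dvd_natCast.2 (Nat.gcd_dvd_right qj q))
    exact ⟨hshift.symm.trans, hshift.trans⟩
  have he : e (a * (k + q : ℕ) / q) = e (a * k / q) := by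
    rcases eq_or_ne q 0 with rfl | hq
    · simp
    · rw [← e_add_intCast (a * k / q) a]
      congr 1
      push_cast
      field_simp
  simp only [ramanujanTerm, hcop, hcong, he]

lemma ramanujanC_eq_sum_range (aj : ℤ) (qj : ℕ) (a : ℤ) (q : ℕ) :
    ramanujanC aj qj a q = ∑ k ∈ range q, ramanujanTerm aj qj a q k := by
  rw [ramanujanC, sum_filter]
  exact (periodic_ramanujanTerm aj qj a q).sum_Icc_one_eq_sum_range

lemma ramanujanTerm_mul {m n : ℕ} (hm : m ≠ 0) (hn : n ≠ 0) (hmn : m.Coprime n)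
    {a atil abar : ℤ} (hsplit : a = atil * m + abar * n) (aj : ℤ) (qj k : ℕ) :
    ramanujanTerm aj qj a (m * n) k =
      ramanujanTerm aj qj abar m k * ramanujanTerm aj qj atil n k := by
  have hcop : k.Coprime (m * n) ↔ k.Coprime m ∧ k.Coprime n := Nat.coprime_mul_iff_right
  have hcong : (k : ℤ) ≡ aj [ZMOD qj.gcd (m * n)] ↔
      (k : ℤ) ≡ aj [ZMOD qj.gcd m] ∧ (k : ℤ) ≡ aj [ZMOD qj.gcd n] := by
    rw [hmn.gcd_mul qj, Nat.cast_mul]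
    exact (Int.modEq_and_modEq_iff_modEq_mul (by simpa using hmn.gcd_both qj qj)).symm
  have he : e (a * k / (m * n : ℕ)) = e (abar * k / m) * e (atil * k / n) := by
    rw [← e_add, hsplit]
    congr 1
    push_cast
    field_simp
    ring
  simp only [ramanujanTerm, hcop, hcong, he, ite_zero_mul_ite_zero, and_and_and_comm]

theorem stmt1_general (qbar qtil : ℕ)
    (hco : Nat.Coprime qbar qtil)
    (a atil abar : ℤ)
    (hsplit : a = atil * qbar + abar * qtil)
    (qj : ℕ) (aj : ℤ) :
    ramanujanC aj qj a (qbar * qtil) =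
      ramanujanC aj qj atil qtil * ramanujanC aj qj abar qbar := by
  rw [mul_comm (ramanujanC _ _ _ _)]
  simp only [ramanujanC_eq_sum_range]
  rw [← (periodic_ramanujanTerm aj qj abar qbar).sum_range_mul_eq_sum_range_mul_sum_range
    (periodic_ramanujanTerm aj qj atil qtil) hco]
  refine sum_congr rfl fun k hk => ?_
  have hk := mem_range.1 hk
  exact ramanujanTerm_mul (Nat.pos_of_lt_mul_right hk).ne' (Nat.pos_of_lt_mul_left hk).ne' hco
    hsplit aj qj k

theorem stmt1 (qbar qtil : ℕ) (hqbar : 1 ≤ qbar) (hqtil : 1 ≤ qtil)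
    (hco : Nat.Coprime qbar qtil)
    (a atil abar : ℤ) (ha : Int.gcd a (qbar * qtil) = 1)
    (hsplit : a = atil * qbar + abar * qtil)
    (hatil : Int.gcd atil qtil = 1) (habar : Int.gcd abar qbar = 1)
    (qj : ℕ) (hqj : 1 ≤ qj) (aj : ℤ) :
    ramanujanC aj qj a (qbar * qtil) =
      ramanujanC aj qj atil qtil * ramanujanC aj qj abar qbar :=
  stmt1_general qbar qtil hco a atil abar hsplit qj aj
end

section
/- Let $n \geq 1$, $Q \geq 1$, $H > 0$, and $b_1, \dots, b_n \in \mathbb{C}$. Then $\sum_{Q < q \leq 2Q} q \max_{0 \leq a < q} \left| \sum_{m \leq n, m \equiv a \pmod q} b_m \right|^2 \ll (n^2 + Q^2) H^{-1} (\log 2Q) \max_{m \leq n} |b_m|^2 + (n + Q^2) H (\log 2Q) \sum_{m \leq n} |b_m|^2$, with an absolute implied constant. -/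
/-!
Cauchy–Schwarz inside each residue class gives `q ‖∑_{m ≡ a_q} b m‖² ≤ (n + 2Q) ∑_{m ≡ a_q} ‖b m‖²`,
so the left side is at most `(n + 2Q) ∑_m ‖b m‖² E_m`, where `E_m` counts the moduli `q` with
`m ≡ a_q (mod q)`. A second Cauchy–Schwarz bounds the square of this by
`(∑ ‖b m‖²) · M · ∑_m E_m²`, and `∑_m E_m²` counts the `m` lying in the classes of both `q` and
`q'`. Those `m` form a single class modulo `lcm q q'`, so there are at most
`n gcd(q, q') / Q² + 1` of them, and `gcd(q, q') = ∑_{d ∣ q, q'} φ(d)` turns the sum of the gcds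
into `∑_{d ≤ 2Q} φ(d) (2Q / d)² ≤ 4Q² (1 + log 2Q)`. Finally `2 √(AB) ≤ A + B` splits the
geometric mean of the two terms of the bound, which is where the free parameter `H` enters.
-/

open Finset

theorem Nat.ModEq.lcm {a b m n : ℕ} (hm : a ≡ b [MOD m]) (hn : a ≡ b [MOD n]) :
    a ≡ b [MOD m.lcm n] := by
  rw [Nat.modEq_iff_dvd, Int.natCast_dvd] at *
  exact Nat.lcm_dvd hm hn

theorem card_le_div_add_one_of_modEq {S : Finset ℕ} {n L : ℕ} (hS : ∀ m ∈ S, m ≤ n)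
    (hL : ∀ a ∈ S, ∀ b ∈ S, a ≡ b [MOD L]) : #S ≤ n / L + 1 := by
  calc #S ≤ #(range (n / L + 1)) := by
        refine card_le_card_of_injOn (· / L) (fun m hm ↦ ?_) (fun a ha b hb hab ↦ ?_)
        · exact mem_range_succ_iff.2 (Nat.div_le_div_right (hS m hm))
        · rw [← Nat.div_add_mod a L, ← Nat.div_add_mod b L, show a / L = b / L from hab,
            hL a ha b hb]
    _ = n / L + 1 := card_range _

theorem mul_card_filter_mod_eq_le (n q r : ℕ) : q * #{m ∈ Icc 1 n | m % q = r} ≤ n + q := by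
  have hcard : #{m ∈ Icc 1 n | m % q = r} ≤ n / q + 1 :=
    card_le_div_add_one_of_modEq (fun m hm ↦ (mem_Icc.1 (mem_filter.1 hm).1).2)
      (fun a ha b hb ↦ (mem_filter.1 ha).2.trans (mem_filter.1 hb).2.symm)
  calc q * #{m ∈ Icc 1 n | m % q = r} ≤ q * (n / q) + q := by nlinarith
    _ ≤ n + q := by have := Nat.mul_div_le n q; omega

theorem card_filter_mod_eq_and_mod_eq_le (n r r' : ℕ) {q q' : ℕ} (hq : 0 < q) :
    (#{m ∈ Icc 1 n | m % q = r ∧ m % q' = r'} : ℝ) ≤ n * q.gcd q' / (q * q') + 1 := by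
  have hcard : #{m ∈ Icc 1 n | m % q = r ∧ m % q' = r'} ≤ n / q.lcm q' + 1 := by
    refine card_le_div_add_one_of_modEq (fun m hm ↦ (mem_Icc.1 (mem_filter.1 hm).1).2)
      (fun a ha b hb ↦ ?_)
    obtain ⟨-, ha, ha'⟩ := mem_filter.1 ha
    obtain ⟨-, hb, hb'⟩ := mem_filter.1 hb
    exact Nat.ModEq.lcm (ha.trans hb.symm) (ha'.trans hb'.symm)
  have hlcm : ((q.lcm q' : ℕ) : ℝ) = q * q' / q.gcd q' := by
    rw [eq_div_iff (by positivity)]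
    exact_mod_cast (mul_comm _ _).trans (Nat.gcd_mul_lcm q q')
  calc (#{m ∈ Icc 1 n | m % q = r ∧ m % q' = r'} : ℝ) ≤ ((n / q.lcm q' : ℕ) : ℝ) + 1 := by
        exact_mod_cast hcard
    _ ≤ n / (q.lcm q' : ℕ) + 1 := by gcongr; exact Nat.cast_div_le
    _ = n * q.gcd q' / (q * q') + 1 := by rw [hlcm, div_div_eq_mul_div]

theorem Nat.gcd_eq_sum_totient_filter {N q : ℕ} (q' : ℕ) (hq : q ∈ Ioc 0 N) :
    q.gcd q' = ∑ d ∈ Icc 1 N with d ∣ q ∧ d ∣ q', d.totient := by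
  obtain ⟨hq0, hqN⟩ := mem_Ioc.1 hq
  rw [← Nat.sum_totient (q.gcd q')]
  congr 1
  ext d
  simp only [mem_filter, mem_Icc, Nat.mem_divisors, Nat.dvd_gcd_iff]
  constructor
  · rintro ⟨hd, -⟩
    exact ⟨⟨Nat.pos_of_dvd_of_pos hd.1 hq0, (Nat.le_of_dvd hq0 hd.1).trans hqN⟩, hd⟩
  · rintro ⟨-, hd⟩
    exact ⟨hd, (Nat.gcd_pos_of_pos_left q' hq0).ne'⟩

theorem sum_sum_gcd_eq_sum_totient_mul_sq {N : ℕ} {I : Finset ℕ} (hI : I ⊆ Ioc 0 N) :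
    ∑ q ∈ I, ∑ q' ∈ I, q.gcd q' = ∑ d ∈ Icc 1 N, d.totient * #{q ∈ I | d ∣ q} ^ 2 := by
  calc ∑ q ∈ I, ∑ q' ∈ I, q.gcd q'
      = ∑ q ∈ I, ∑ q' ∈ I, ∑ d ∈ Icc 1 N,
          d.totient * ((if d ∣ q then 1 else 0) * (if d ∣ q' then 1 else 0)) := by
        refine sum_congr rfl fun q hq ↦ sum_congr rfl fun q' _ ↦ ?_
        rw [Nat.gcd_eq_sum_totient_filter q' (hI hq), sum_filter]
        simp_rw [ite_zero_mul_ite_zero, mul_one, mul_boole]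
    _ = ∑ d ∈ Icc 1 N, d.totient * #{q ∈ I | d ∣ q} ^ 2 := by
        conv_lhs => enter [2, q]; rw [sum_comm]
        rw [sum_comm]
        refine sum_congr rfl fun d _ ↦ ?_
        rw [sq, card_filter, sum_mul_sum, mul_sum]
        simp_rw [mul_sum]

theorem sum_sum_gcd_le {N : ℕ} {I : Finset ℕ} (hI : I ⊆ Ioc 0 N) :
    ∑ q ∈ I, ∑ q' ∈ I, (q.gcd q' : ℝ) ≤ N ^ 2 * (1 + Real.log N) := by
  have hterm : ∀ d ∈ Icc 1 N, (d.totient : ℝ) * #{q ∈ I | d ∣ q} ^ 2 ≤ N ^ 2 * (d : ℝ)⁻¹ := by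
    intro d hd
    have hd : (0 : ℝ) < d := by exact_mod_cast (mem_Icc.1 hd).1
    have hcard : (#{q ∈ I | d ∣ q} : ℝ) ≤ N / d := by
      calc (#{q ∈ I | d ∣ q} : ℝ) ≤ ((N / d : ℕ) : ℝ) := by
            rw [← Nat.Ioc_filter_dvd_card_eq_div]
            exact_mod_cast card_le_card (filter_subset_filter _ hI)
        _ ≤ N / d := Nat.cast_div_le
    calc (d.totient : ℝ) * #{q ∈ I | d ∣ q} ^ 2 ≤ d * (N / d) ^ 2 := by
          gcongr
          exact_mod_cast Nat.totient_le d
      _ = N ^ 2 * (d : ℝ)⁻¹ := by field_simp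
  calc ∑ q ∈ I, ∑ q' ∈ I, (q.gcd q' : ℝ)
      = ∑ d ∈ Icc 1 N, (d.totient : ℝ) * #{q ∈ I | d ∣ q} ^ 2 := by
        exact_mod_cast sum_sum_gcd_eq_sum_totient_mul_sq hI
    _ ≤ ∑ d ∈ Icc 1 N, N ^ 2 * (d : ℝ)⁻¹ := sum_le_sum hterm
    _ = N ^ 2 * harmonic N := by simp [harmonic_eq_sum_Icc, mul_sum]
    _ ≤ N ^ 2 * (1 + Real.log N) := by gcongr; exact harmonic_le_one_add_log N

theorem norm_sum_sq_le_card_mul_sum_norm_sq {α E : Type*} [SeminormedAddCommGroup E]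
    (s : Finset α) (b : α → E) : ‖∑ m ∈ s, b m‖ ^ 2 ≤ #s * ∑ m ∈ s, ‖b m‖ ^ 2 :=
  (pow_le_pow_left₀ (norm_nonneg _) (norm_sum_le s b) 2).trans sq_sum_le_card_mul_sum_sq

section DoubleCounting

variable {ι α : Type*} (I : Finset ι) (S : Finset α) (r : ι → α → Prop)
  [∀ q m, Decidable (r q m)]

theorem sum_sum_filter_eq_sum_mul_card {R : Type*} [NonAssocSemiring R] (g : α → R) :
    ∑ q ∈ I, ∑ m ∈ S with r q m, g m = ∑ m ∈ S, g m * #{q ∈ I | r q m} := by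
  calc ∑ q ∈ I, ∑ m ∈ S with r q m, g m = ∑ m ∈ S, ∑ q ∈ I with r q m, g m :=
        sum_sum_bipartiteAbove_eq_sum_sum_bipartiteBelow r fun _ m ↦ g m
    _ = ∑ m ∈ S, g m * #{q ∈ I | r q m} := by simp only [sum_const, nsmul_eq_mul']

theorem sum_card_filter_sq :
    ∑ m ∈ S, #{q ∈ I | r q m} ^ 2 = ∑ q ∈ I, ∑ q' ∈ I, #{m ∈ S | r q m ∧ r q' m} := by
  simp_rw [sq, card_filter, sum_mul_sum, ite_zero_mul_ite_zero, mul_one]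
  rw [sum_comm]
  exact sum_congr rfl fun q _ ↦ sum_comm

variable {E : Type*} [SeminormedAddCommGroup E] (b : α → E)

theorem sum_mul_norm_sum_filter_sq_le {c : ι → ℝ} {K : ℝ} (hc : ∀ q ∈ I, 0 ≤ c q)
    (hK : ∀ q ∈ I, c q * #{m ∈ S | r q m} ≤ K) :
    ∑ q ∈ I, c q * ‖∑ m ∈ S with r q m, b m‖ ^ 2 ≤
      K * ∑ m ∈ S, ‖b m‖ ^ 2 * #{q ∈ I | r q m} := by
  calc ∑ q ∈ I, c q * ‖∑ m ∈ S with r q m, b m‖ ^ 2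
      ≤ ∑ q ∈ I, c q * (#{m ∈ S | r q m} * ∑ m ∈ S with r q m, ‖b m‖ ^ 2) :=
        sum_le_sum fun q hq ↦
          mul_le_mul_of_nonneg_left (norm_sum_sq_le_card_mul_sum_norm_sq _ b) (hc q hq)
    _ ≤ ∑ q ∈ I, K * ∑ m ∈ S with r q m, ‖b m‖ ^ 2 := by
        refine sum_le_sum fun q hq ↦ ?_
        rw [← mul_assoc]
        exact mul_le_mul_of_nonneg_right (hK q hq) (by positivity)
    _ = K * ∑ m ∈ S, ‖b m‖ ^ 2 * #{q ∈ I | r q m} := by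
        rw [← mul_sum, sum_sum_filter_eq_sum_mul_card]

theorem sum_norm_sq_mul_card_sq_le {M : ℝ} (hM : ∀ m ∈ S, ‖b m‖ ^ 2 ≤ M) :
    (∑ m ∈ S, ‖b m‖ ^ 2 * #{q ∈ I | r q m}) ^ 2 ≤
      (∑ m ∈ S, ‖b m‖ ^ 2) * M * ∑ q ∈ I, ∑ q' ∈ I, #{m ∈ S | r q m ∧ r q' m} := by
  calc (∑ m ∈ S, ‖b m‖ ^ 2 * #{q ∈ I | r q m}) ^ 2
      = (∑ m ∈ S, ‖b m‖ * (‖b m‖ * #{q ∈ I | r q m})) ^ 2 := by simp only [sq, mul_assoc]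
    _ ≤ (∑ m ∈ S, ‖b m‖ ^ 2) * ∑ m ∈ S, (‖b m‖ * #{q ∈ I | r q m}) ^ 2 :=
        sum_mul_sq_le_sq_mul_sq _ _ _
    _ ≤ (∑ m ∈ S, ‖b m‖ ^ 2) * ∑ m ∈ S, M * (#{q ∈ I | r q m} : ℝ) ^ 2 := by
        gcongr with m hm
        rw [mul_pow]
        exact mul_le_mul_of_nonneg_right (hM m hm) (by positivity)
    _ = (∑ m ∈ S, ‖b m‖ ^ 2) * M * ∑ q ∈ I, ∑ q' ∈ I, #{m ∈ S | r q m ∧ r q' m} := by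
        rw [← mul_sum, ← mul_assoc]
        congr 1
        exact_mod_cast sum_card_filter_sq I S r

theorem sq_sum_mul_norm_sum_filter_sq_le {c : ι → ℝ} {K M : ℝ} (hc : ∀ q ∈ I, 0 ≤ c q)
    (hK : ∀ q ∈ I, c q * #{m ∈ S | r q m} ≤ K) (hM : ∀ m ∈ S, ‖b m‖ ^ 2 ≤ M) :
    (∑ q ∈ I, c q * ‖∑ m ∈ S with r q m, b m‖ ^ 2) ^ 2 ≤
      K ^ 2 * (∑ m ∈ S, ‖b m‖ ^ 2) * M * ∑ q ∈ I, ∑ q' ∈ I, #{m ∈ S | r q m ∧ r q' m} := by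
  have hX : 0 ≤ ∑ q ∈ I, c q * ‖∑ m ∈ S with r q m, b m‖ ^ 2 :=
    sum_nonneg fun q hq ↦ mul_nonneg (hc q hq) (sq_nonneg _)
  calc (∑ q ∈ I, c q * ‖∑ m ∈ S with r q m, b m‖ ^ 2) ^ 2
      ≤ (K * ∑ m ∈ S, ‖b m‖ ^ 2 * #{q ∈ I | r q m}) ^ 2 :=
        pow_le_pow_left₀ hX (sum_mul_norm_sum_filter_sq_le I S r b hc hK) 2
    _ ≤ K ^ 2 * ((∑ m ∈ S, ‖b m‖ ^ 2) * M * ∑ q ∈ I, ∑ q' ∈ I, #{m ∈ S | r q m ∧ r q' m}) := by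
        rw [mul_pow]
        exact mul_le_mul_of_nonneg_left (sum_norm_sq_mul_card_sq_le I S r b hM) (sq_nonneg K)
    _ = _ := by ring

end DoubleCounting

theorem sum_sum_card_filter_mod_eq_le (n : ℕ) {Q : ℕ} (hQ : 0 < Q) (f : ℕ → ℕ) :
    ((∑ q ∈ Ioc Q (2 * Q), ∑ q' ∈ Ioc Q (2 * Q),
        #{m ∈ Icc 1 n | m % q = f q ∧ m % q' = f q'} : ℕ) : ℝ) ≤
      4 * n * (1 + Real.log (2 * Q)) + Q ^ 2 := by
  have hpair : ∀ q ∈ Ioc Q (2 * Q), ∀ q' ∈ Ioc Q (2 * Q),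
      (#{m ∈ Icc 1 n | m % q = f q ∧ m % q' = f q'} : ℝ) ≤ n / Q ^ 2 * q.gcd q' + 1 := by
    intro q hq q' hq'
    have hQq : (Q : ℝ) < q := by exact_mod_cast (mem_Ioc.1 hq).1
    have hQq' : (Q : ℝ) < q' := by exact_mod_cast (mem_Ioc.1 hq').1
    calc (#{m ∈ Icc 1 n | m % q = f q ∧ m % q' = f q'} : ℝ)
        ≤ n * q.gcd q' / (q * q') + 1 :=
          card_filter_mod_eq_and_mod_eq_le n _ _ ((Nat.zero_le Q).trans_lt (mem_Ioc.1 hq).1)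
      _ ≤ n * q.gcd q' / Q ^ 2 + 1 := by
        gcongr
        rw [sq]
        gcongr
      _ = n / Q ^ 2 * q.gcd q' + 1 := by ring
  have hcard : #(Ioc Q (2 * Q)) = Q := by rw [Nat.card_Ioc]; omega
  calc ((∑ q ∈ Ioc Q (2 * Q), ∑ q' ∈ Ioc Q (2 * Q),
        #{m ∈ Icc 1 n | m % q = f q ∧ m % q' = f q'} : ℕ) : ℝ)
      ≤ ∑ q ∈ Ioc Q (2 * Q), ∑ q' ∈ Ioc Q (2 * Q), ((n : ℝ) / Q ^ 2 * q.gcd q' + 1) := by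
        push_cast
        exact sum_le_sum fun q hq ↦ sum_le_sum fun q' hq' ↦ hpair q hq q' hq'
    _ = n / Q ^ 2 * ∑ q ∈ Ioc Q (2 * Q), ∑ q' ∈ Ioc Q (2 * Q), (q.gcd q' : ℝ) + Q * Q := by
        simp [sum_add_distrib, mul_sum, hcard]
    _ ≤ n / Q ^ 2 * ((2 * Q : ℕ) ^ 2 * (1 + Real.log (2 * Q : ℕ))) + Q * Q := by
        gcongr
        exact sum_sum_gcd_le (Ioc_subset_Ioc_left (Nat.zero_le Q))
    _ = 4 * n * (1 + Real.log (2 * Q)) + Q ^ 2 := by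
        push_cast
        field_simp
        ring

theorem le_mul_add_of_sq_le_four_mul_sq_mul {x a b c : ℝ} (ha : 0 ≤ a) (hb : 0 ≤ b)
    (hc : 0 ≤ c) (h : x ^ 2 ≤ 4 * c ^ 2 * (a * b)) : x ≤ c * (a + b) := by
  have hsq : x ^ 2 ≤ (c * (a + b)) ^ 2 :=
    calc x ^ 2 ≤ c ^ 2 * (4 * a * b) := by linarith
      _ ≤ c ^ 2 * (a + b) ^ 2 := mul_le_mul_of_nonneg_left (four_mul_le_sq_add a b) (sq_nonneg c)
      _ = (c * (a + b)) ^ 2 := (mul_pow c _ 2).symm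
  exact (le_abs_self x).trans (abs_le_of_sq_le_sq hsq (by positivity))

theorem one_half_le_log_two_mul {Q : ℕ} (hQ : 1 ≤ Q) : 1 / 2 ≤ Real.log (2 * Q) := by
  have : Real.log 2 ≤ Real.log (2 * Q) := Real.log_le_log two_pos (by norm_cast; omega)
  linarith [Real.log_two_gt_d9]

theorem add_two_mul_sq_mul_le {x y L : ℝ} (hx : 0 ≤ x) (hL : 1 / 2 ≤ L) :
    (x + 2 * y) ^ 2 * (4 * x * (1 + L) + y ^ 2) ≤
      144 * ((x ^ 2 + y ^ 2) * (x + y ^ 2) * L ^ 2) := by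
  have h₁ : (x + 2 * y) ^ 2 ≤ 6 * (x ^ 2 + y ^ 2) := by nlinarith [sq_nonneg (x - y)]
  have h₂ : 4 * x * (1 + L) + y ^ 2 ≤ 24 * L ^ 2 * (x + y ^ 2) := by
    nlinarith [mul_nonneg hx (mul_nonneg (sub_nonneg.2 hL) (sub_nonneg.2 hL)), sq_nonneg y]
  calc (x + 2 * y) ^ 2 * (4 * x * (1 + L) + y ^ 2)
      ≤ 6 * (x ^ 2 + y ^ 2) * (24 * L ^ 2 * (x + y ^ 2)) :=
        mul_le_mul h₁ h₂ (by positivity) (by positivity)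
    _ = 144 * ((x ^ 2 + y ^ 2) * (x + y ^ 2) * L ^ 2) := by ring

theorem stmt10 :
    ∃ C : ℝ, 0 < C ∧ ∀ (n Q : ℕ), 1 ≤ n → 1 ≤ Q → ∀ H : ℝ, 0 < H →
      ∀ b : ℕ → ℂ, ∀ f : ℕ → ℕ, (∀ q ∈ Finset.Ioc Q (2 * Q), f q < q) →
      ∀ M : ℝ, (∀ m ∈ Finset.Icc 1 n, ‖b m‖ ^ 2 ≤ M) →
      ∑ q ∈ Finset.Ioc Q (2 * Q),
          (q : ℝ) *
            ‖∑ m ∈ (Finset.Icc 1 n).filter (fun m => m % q = f q), b m‖ ^ 2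
        ≤ C * (((n : ℝ) ^ 2 + (Q : ℝ) ^ 2) * H⁻¹ * Real.log (2 * Q) * M +
            ((n : ℝ) + (Q : ℝ) ^ 2) * H * Real.log (2 * Q) *
              ∑ m ∈ Finset.Icc 1 n, ‖b m‖ ^ 2) := by
  refine ⟨6, by norm_num, fun n Q hn hQ H hH b f _ M hM ↦ ?_⟩
  set L := Real.log (2 * Q)
  set B := ∑ m ∈ Icc 1 n, ‖b m‖ ^ 2
  have hL : 1 / 2 ≤ L := one_half_le_log_two_mul hQ
  have hM0 : 0 ≤ M := (sq_nonneg _).trans (hM 1 (by simp [hn]))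
  have hB0 : 0 ≤ B := by positivity
  have hK : ∀ q ∈ Ioc Q (2 * Q), (q : ℝ) * #{m ∈ Icc 1 n | m % q = f q} ≤ n + 2 * Q := by
    intro q hq
    have hcard := mul_card_filter_mod_eq_le n q (f q)
    have hq2Q := (mem_Ioc.1 hq).2
    exact_mod_cast (by omega : q * #{m ∈ Icc 1 n | m % q = f q} ≤ n + 2 * Q)
  have hLS := sq_sum_mul_norm_sum_filter_sq_le (Ioc Q (2 * Q)) (Icc 1 n)
    (fun q m ↦ m % q = f q) b (fun q _ ↦ Nat.cast_nonneg q) hK hM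
  have hD := mul_le_mul_of_nonneg_left (sum_sum_card_filter_mod_eq_le n hQ f)
    (by positivity : 0 ≤ ((n : ℝ) + 2 * Q) ^ 2 * B * M)
  refine le_mul_add_of_sq_le_four_mul_sq_mul (by positivity) (by positivity) (by norm_num)
    (hLS.trans (hD.trans ?_))
  calc ((n : ℝ) + 2 * Q) ^ 2 * B * M * (4 * n * (1 + L) + Q ^ 2)
      = ((n : ℝ) + 2 * Q) ^ 2 * (4 * n * (1 + L) + Q ^ 2) * (M * B) := by ring
    _ ≤ 144 * ((n ^ 2 + Q ^ 2) * (n + Q ^ 2) * L ^ 2) * (M * B) :=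
        mul_le_mul_of_nonneg_right (add_two_mul_sq_mul_le n.cast_nonneg hL) (by positivity)
    _ = 4 * 6 ^ 2 * ((n ^ 2 + Q ^ 2) * H⁻¹ * L * M * ((n + Q ^ 2) * H * L * B)) := by
        field_simp
        ring
end

section
/- There exists an absolute constant $\eta > 0$ such that for all $n \geq 2$, $\sum_{q_1, q_2, q_3 \leq n} \frac{(q_1,q_2)(q_1,q_3)(q_2,q_3)}{q_1 q_2 q_3 (q_1,q_2,q_3)} \tau^4(q_1) \tau^4(q_2) \tau^4(q_3) \ll (\log n)^{\eta}$, where $\tau$ is the divisor function and $(\cdot,\cdot)$ denotes gcd. -/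
/-!
Comparing `p`-adic valuations gives `(q₁,q₂)(q₁,q₃)(q₂,q₃) · [q₁,q₂,q₃] = q₁q₂q₃ (q₁,q₂,q₃)`, so each
term equals `τ⁴(q₁)τ⁴(q₂)τ⁴(q₃) / m ≤ τ(m)¹² / m` with `m = [q₁,q₂,q₃] ≤ n³`. A given `m` is the lcm
of at most `τ(m)³` triples, so the sum is at most `∑_{m ≤ n³} τ(m)¹⁵ / m`. Since `τ(ab) ≤ τ(a)τ(b)`,
the moment `∑_{m ≤ N} τ(m)^(k+1) / m` is at most the square of `∑_{m ≤ N} τ(m)^k / m`, and induction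
from the harmonic bound gives `(1 + log N)^(2^k)`.
-/

open Finset

theorem Nat.card_divisors_mul_le (m n : ℕ) : #(m * n).divisors ≤ #m.divisors * #n.divisors := by
  rw [Nat.divisors_mul]; exact card_mul_le

noncomputable def divisorMoment (k : ℕ) : ArithmeticFunction ℝ :=
  ⟨fun m => (#m.divisors : ℝ) ^ k / m, by simp⟩

theorem divisorMoment_apply (k m : ℕ) : divisorMoment k m = (#m.divisors : ℝ) ^ k / m := rfl

theorem divisorMoment_succ_le_mul (k m : ℕ) :
    divisorMoment (k + 1) m ≤ (divisorMoment k * divisorMoment k) m := by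
  have hcard : #m.divisorsAntidiagonal = #m.divisors := by
    rw [← Nat.map_div_right_divisors, card_map]
  calc divisorMoment (k + 1) m = ∑ _x ∈ m.divisorsAntidiagonal, (#m.divisors : ℝ) ^ k / m := by
        rw [sum_const, hcard, nsmul_eq_mul, divisorMoment_apply, pow_succ]; ring
    _ ≤ ∑ x ∈ m.divisorsAntidiagonal, divisorMoment k x.1 * divisorMoment k x.2 := by
        refine sum_le_sum fun x hx => ?_
        obtain ⟨rfl, -⟩ := Nat.mem_divisorsAntidiagonal.mp hx
        rw [divisorMoment_apply, divisorMoment_apply, div_mul_div_comm, ← mul_pow]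
        push_cast
        gcongr
        exact_mod_cast Nat.card_divisors_mul_le x.1 x.2
    _ = (divisorMoment k * divisorMoment k) m := (ArithmeticFunction.mul_apply ..).symm

theorem sum_Icc_divisorMoment_le (k N : ℕ) :
    ∑ m ∈ Icc 1 N, divisorMoment k m ≤ (1 + Real.log N) ^ 2 ^ k := by
  induction k with
  | zero =>
    simpa [divisorMoment_apply, harmonic_eq_sum_Icc] using harmonic_le_one_add_log N
  | succ k ih =>
    have hnonneg : ∀ m, 0 ≤ divisorMoment k m := fun m => by
      rw [divisorMoment_apply]; positivity
    calc ∑ m ∈ Icc 1 N, divisorMoment (k + 1) m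
        ≤ ∑ m ∈ Ioc 0 N, (divisorMoment k * divisorMoment k) m :=
          sum_le_sum fun m _ => divisorMoment_succ_le_mul k m
      _ = ∑ x ∈ Ioc 0 N ×ˢ Ioc 0 N with x.1 * x.2 ≤ N, divisorMoment k x.1 * divisorMoment k x.2 :=
          ArithmeticFunction.sum_Ioc_mul_eq_sum_prod_filter ..
      _ ≤ ∑ x ∈ Ioc 0 N ×ˢ Ioc 0 N, divisorMoment k x.1 * divisorMoment k x.2 :=
          sum_le_sum_of_subset_of_nonneg (filter_subset _ _) fun x _ _ =>
            mul_nonneg (hnonneg _) (hnonneg _)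
      _ = (∑ m ∈ Icc 1 N, divisorMoment k m) ^ 2 := by
          rw [sum_product, sq, sum_mul_sum]; rfl
      _ ≤ ((1 + Real.log N) ^ 2 ^ k) ^ 2 := by
          gcongr
          exact sum_nonneg fun m _ => hnonneg m
      _ = (1 + Real.log N) ^ 2 ^ (k + 1) := by rw [← pow_mul, pow_succ]

theorem Nat.gcd_mul_gcd_mul_gcd_mul_lcm_lcm (a b c : ℕ) :
    a.gcd b * a.gcd c * b.gcd c * a.lcm (b.lcm c) = a * b * c * a.gcd (b.gcd c) := by
  rcases eq_or_ne a 0 with rfl | ha; · simp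
  rcases eq_or_ne b 0 with rfl | hb; · simp
  rcases eq_or_ne c 0 with rfl | hc; · simp
  apply Nat.eq_of_factorization_eq (by positivity) (by positivity) fun p => ?_
  simp [Nat.factorization_mul, Nat.factorization_gcd, Nat.factorization_lcm, ha, hb, hc]
  omega

theorem gcd_mul_gcd_mul_gcd_div_eq_inv_lcm (a b c : ℕ) :
    ((a.gcd b : ℝ) * a.gcd c * b.gcd c) / ((a : ℝ) * b * c * a.gcd (b.gcd c)) =
      ((a.lcm (b.lcm c) : ℕ) : ℝ)⁻¹ := by
  rcases eq_or_ne a 0 with rfl | ha; · simp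
  rcases eq_or_ne b 0 with rfl | hb; · simp
  rcases eq_or_ne c 0 with rfl | hc; · simp
  have key : ((a.gcd b : ℝ) * a.gcd c * b.gcd c) * (a.lcm (b.lcm c) : ℕ) =
      (a : ℝ) * b * c * a.gcd (b.gcd c) := by
    exact_mod_cast Nat.gcd_mul_gcd_mul_gcd_mul_lcm_lcm a b c
  rw [← key]
  field_simp

theorem gcd_mul_gcd_mul_gcd_div_mul_card_divisors_le (a b c : ℕ) :
    ((a.gcd b : ℝ) * a.gcd c * b.gcd c) / ((a : ℝ) * b * c * a.gcd (b.gcd c)) *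
        ((#a.divisors : ℝ) ^ 4 * (#b.divisors : ℝ) ^ 4 * (#c.divisors : ℝ) ^ 4) ≤
      divisorMoment 12 (a.lcm (b.lcm c)) := by
  set L := a.lcm (b.lcm c)
  rcases eq_or_ne L 0 with hL | hL
  · simp [gcd_mul_gcd_mul_gcd_div_eq_inv_lcm, L, hL]
  rw [gcd_mul_gcd_mul_gcd_div_eq_inv_lcm, divisorMoment_apply, inv_mul_eq_div]
  gcongr (?_ : ℝ) / _
  calc (#a.divisors : ℝ) ^ 4 * (#b.divisors : ℝ) ^ 4 * (#c.divisors : ℝ) ^ 4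
      ≤ (#L.divisors : ℝ) ^ 4 * (#L.divisors : ℝ) ^ 4 * (#L.divisors : ℝ) ^ 4 := by
        gcongr
        · exact Nat.dvd_lcm_left _ _
        · exact (Nat.dvd_lcm_left _ _).trans (Nat.dvd_lcm_right _ _)
        · exact (Nat.dvd_lcm_right _ _).trans (Nat.dvd_lcm_right _ _)
    _ = (#L.divisors : ℝ) ^ 12 := by ring

theorem sum_Icc_divisorMoment_lcm_le (k n : ℕ) :
    ∑ a ∈ Icc 1 n, ∑ b ∈ Icc 1 n, ∑ c ∈ Icc 1 n, divisorMoment k (a.lcm (b.lcm c)) ≤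
      ∑ m ∈ Icc 1 (n ^ 3), divisorMoment (k + 3) m := by
  set s := Icc 1 n
  have hmaps : ∀ x ∈ s ×ˢ s ×ˢ s, x.1.lcm (x.2.1.lcm x.2.2) ∈ Icc 1 (n ^ 3) := by
    rintro ⟨a, b, c⟩ hx
    simp only [s, mem_product, mem_Icc] at hx
    obtain ⟨⟨ha, ha'⟩, ⟨hb, hb'⟩, ⟨hc, hc'⟩⟩ := hx
    have hdvd : a.lcm (b.lcm c) ∣ a * (b * c) :=
      (Nat.lcm_dvd_mul _ _).trans (mul_dvd_mul_left a (Nat.lcm_dvd_mul b c))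
    refine mem_Icc.mpr ⟨Nat.lcm_pos ha (Nat.lcm_pos hb hc), ?_⟩
    calc a.lcm (b.lcm c) ≤ a * (b * c) := Nat.le_of_dvd (by positivity) hdvd
      _ ≤ n * (n * n) := by gcongr
      _ = n ^ 3 := by ring
  have hfiber : ∀ m ∈ Icc 1 (n ^ 3), #{x ∈ s ×ˢ s ×ˢ s | x.1.lcm (x.2.1.lcm x.2.2) = m} ≤
      #m.divisors ^ 3 := by
    intro m hm
    have hm0 : m ≠ 0 := by grind
    calc _ ≤ #(m.divisors ×ˢ m.divisors ×ˢ m.divisors) := by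
          refine card_le_card fun x hx => ?_
          obtain ⟨-, rfl⟩ := mem_filter.mp hx
          simp only [mem_product, Nat.mem_divisors, and_iff_left hm0]
          exact ⟨Nat.dvd_lcm_left _ _, (Nat.dvd_lcm_left _ _).trans (Nat.dvd_lcm_right _ _),
            (Nat.dvd_lcm_right _ _).trans (Nat.dvd_lcm_right _ _)⟩
      _ = #m.divisors ^ 3 := by rw [card_product, card_product]; ring
  simp only [← sum_product']
  rw [← sum_fiberwise_of_maps_to hmaps]
  refine sum_le_sum fun m hm => ?_
  rw [sum_congr rfl fun x hx => by rw [(mem_filter.mp hx).2], sum_const, nsmul_eq_mul]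
  calc _ ≤ (#m.divisors : ℝ) ^ 3 * divisorMoment k m := by
        gcongr
        · rw [divisorMoment_apply]; positivity
        · exact_mod_cast hfiber m hm
    _ = divisorMoment (k + 3) m := by simp only [divisorMoment_apply]; ring

theorem one_add_log_pow_three_le (n : ℕ) (hn : 2 ≤ n) :
    1 + Real.log (n ^ 3 : ℕ) ≤ 5 * Real.log n := by
  have hlog2 : Real.log 2 ≤ Real.log n := Real.log_le_log two_pos (by exact_mod_cast hn)
  have := Real.log_two_gt_d9
  push_cast
  rw [Real.log_pow]
  push_cast
  linarith

theorem stmt15 :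
    ∃ η : ℕ, 0 < η ∧ ∃ C : ℝ, 0 < C ∧ ∀ n : ℕ, 2 ≤ n →
      ∑ q1 ∈ Finset.Icc 1 n, ∑ q2 ∈ Finset.Icc 1 n, ∑ q3 ∈ Finset.Icc 1 n,
          ((Nat.gcd q1 q2 : ℝ) * (Nat.gcd q1 q3 : ℝ) * (Nat.gcd q2 q3 : ℝ)) /
              ((q1 : ℝ) * q2 * q3 * (Nat.gcd q1 (Nat.gcd q2 q3) : ℝ)) *
            ((q1.divisors.card : ℝ) ^ 4 * (q2.divisors.card : ℝ) ^ 4 *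
              (q3.divisors.card : ℝ) ^ 4)
        ≤ C * (Real.log n) ^ η := by
  refine ⟨2 ^ 15, by positivity, 5 ^ 2 ^ 15, by positivity, fun n hn => ?_⟩
  calc _ ≤ ∑ a ∈ Icc 1 n, ∑ b ∈ Icc 1 n, ∑ c ∈ Icc 1 n, divisorMoment 12 (a.lcm (b.lcm c)) := by
        gcongr with a _ b _ c _
        exact gcd_mul_gcd_mul_gcd_div_mul_card_divisors_le a b c
    _ ≤ ∑ m ∈ Icc 1 (n ^ 3), divisorMoment 15 m := sum_Icc_divisorMoment_lcm_le 12 n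
    _ ≤ (1 + Real.log (n ^ 3 : ℕ)) ^ 2 ^ 15 := sum_Icc_divisorMoment_le 15 _
    _ ≤ (5 * Real.log n) ^ 2 ^ 15 := by
        gcongr
        exact one_add_log_pow_three_le n hn
    _ = 5 ^ 2 ^ 15 * Real.log n ^ 2 ^ 15 := mul_pow ..
end

section
/- Let $n$ be odd, and let $q_3, a_3$ with $(a_3, q_3) = 1$ and $q_2$ be given. Then there exists $a_2$ with $(a_2, q_2) = 1$ such that for every prime $p \mid (q_3, q_2)$ we have $n \not\equiv a_3 + a_2 \pmod p$. Moreover, given additionally any $q_1$, there exists $a_1$ with $(a_1, q_1) = 1$ such that: (1) $n \equiv a_1 + a_2 + a_3 \pmod{(q_1,q_2,q_3)}$; (2) for every prime $p \mid (q_1,q_2)$ with $p \nmid q_3$, $n \not\equiv a_1 + a_2 \pmod p$; (3) for every prime $p \mid (q_1,q_3)$ with $p \nmid q_2$, $n \not\equiv a_1 + a_3 \pmod p$. -/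
/-!
Both residues are built prime by prime and glued with the Chinese Remainder Theorem. At a prime
`p` the residue must be a unit avoiding at most one further class; for odd `p` two classes never
exhaust `ZMod p`, and for `p = 2` the extra class is `n - a` with `a` odd, i.e. the class `0`
again. For `a₁` one writes `a₁ = n - a₂ - a₃ + g t` with `g = (q₁, q₂, q₃)`: at primes of `g`
the choice of `a₂` already makes `a₁` a unit, and at the other primes `g` is invertible, so `t`
can be chosen freely.
-/

theorem Int.gcd_natCast_eq_one_iff {a : ℤ} {q : ℕ} :
    Int.gcd a q = 1 ↔ ∀ p : ℕ, p.Prime → p ∣ q → ¬ (p : ℤ) ∣ a := by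
  rw [Int.gcd_eq_natAbs, Int.natAbs_natCast]
  refine ⟨fun h p hp hpq hpa => hp.one_lt.ne' ?_, fun h => ?_⟩
  · exact Nat.Coprime.eq_one_of_dvd (Nat.Coprime.coprime_dvd_left (Int.natCast_dvd.mp hpa) h) hpq
  · exact (Nat.coprime_of_dvd fun p hp hpq hpa => h p hp hpq (Int.natCast_dvd.mpr hpa)).symm

theorem two_dvd_sub_of_gcd_eq_one {n a : ℤ} {q : ℕ} (hn : ¬ 2 ∣ n) (ha : Int.gcd a q = 1)
    (hq : 2 ∣ q) : 2 ∣ n - a := by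
  have := Int.gcd_natCast_eq_one_iff.mp ha 2 Nat.prime_two hq
  omega

theorem ZMod.exists_ne_zero_ne {p : ℕ} [Fact p.Prime] (b : ZMod p) (hb : p = 2 → b = 0) :
    ∃ w : ZMod p, w ≠ 0 ∧ w ≠ b := by
  by_cases hb0 : b = 0
  · exact ⟨1, one_ne_zero, hb0 ▸ one_ne_zero⟩
  -- for odd `p`, `2 * b` differs from both `0` and `b`
  have h2 : (2 : ZMod p) ≠ 0 := Ring.two_ne_zero (by rw [ZMod.ringChar_zmod_n]; exact mt hb hb0)
  refine ⟨2 * b, mul_ne_zero h2 hb0, fun h => hb0 ?_⟩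
  linear_combination h

theorem exists_intCast_eq_of_forall_prime (s : Finset ℕ) (hs : ∀ p ∈ s, p.Prime)
    (z : ∀ p : ℕ, ZMod p) : ∃ x : ℤ, ∀ p ∈ s, (x : ZMod p) = z p := by
  have hpair : Set.Pairwise s Nat.Coprime := fun p hp r hr hpr =>
    (Nat.coprime_primes (hs p hp) (hs r hr)).mpr hpr
  obtain ⟨k, hk⟩ := Nat.chineseRemainderOfFinset (fun p => (z p).val) id s
    (fun p hp => (hs p hp).ne_zero) hpair
  refine ⟨k, fun p hp => ?_⟩
  have : NeZero p := ⟨(hs p hp).ne_zero⟩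
  rw [Int.cast_natCast, (ZMod.natCast_eq_natCast_iff _ _ _).mpr (hk p hp), ZMod.natCast_zmod_val]

theorem exists_gcd_eq_one_dvd_sub_not_dvd_sub {q : ℕ} (hq : q ≠ 0) (g : ℕ) {c : ℤ}
    (hc : ∀ p : ℕ, p.Prime → p ∣ q → p ∣ g → ¬ (p : ℤ) ∣ c) (b : ℕ → ℤ) (hb : 2 ∣ b 2) :
    ∃ a : ℤ, Int.gcd a q = 1 ∧ (g : ℤ) ∣ a - c ∧
      ∀ p : ℕ, p.Prime → p ∣ q → ¬ p ∣ g → ¬ (p : ℤ) ∣ a - b p := by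
  have hw : ∀ p : ℕ, ∃ w : ZMod p, p.Prime → w ≠ 0 ∧ w ≠ b p := by
    intro p
    by_cases hp : p.Prime
    · have := Fact.mk hp
      obtain ⟨w, hw⟩ := ZMod.exists_ne_zero_ne (b p : ZMod p) fun h => by
        subst h; exact (ZMod.intCast_zmod_eq_zero_iff_dvd _ 2).mpr hb
      exact ⟨w, fun _ => hw⟩
    · exact ⟨0, fun h => absurd h hp⟩
  choose w hw using hw
  -- `t` is chosen so that `c + g * t ≡ w p` at every prime `p ∣ q` not dividing `g`.
  obtain ⟨t, ht⟩ := exists_intCast_eq_of_forall_prime q.primeFactors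
    (fun p hp => (Nat.mem_primeFactors.mp hp).1) fun p => (g : ZMod p)⁻¹ * (w p - c)
  have hcast : ∀ p : ℕ, p.Prime → p ∣ q → ¬ p ∣ g → ((c + g * t : ℤ) : ZMod p) = w p := by
    intro p hp hpq hpg
    have := Fact.mk hp
    have hg : (g : ZMod p) ≠ 0 := by rwa [Ne, ZMod.natCast_eq_zero_iff]
    rw [Int.cast_add, Int.cast_mul, Int.cast_natCast, ht p (Nat.mem_primeFactors.mpr ⟨hp, hpq, hq⟩),
      mul_inv_cancel_left₀ hg, add_sub_cancel]
  refine ⟨c + g * t, Int.gcd_natCast_eq_one_iff.mpr fun p hp hpq => ?_, ⟨t, by ring⟩,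
    fun p hp hpq hpg => ?_⟩
  · by_cases hpg : p ∣ g
    · rw [dvd_add_left (dvd_mul_of_dvd_left (Int.natCast_dvd_natCast.mpr hpg) t)]
      exact hc p hp hpq hpg
    · rw [← ZMod.intCast_zmod_eq_zero_iff_dvd, hcast p hp hpq hpg]
      exact (hw p hp).1
  · rw [dvd_sub_comm, ← ZMod.intCast_eq_intCast_iff_dvd_sub, hcast p hp hpq hpg]
    exact (hw p hp).2

theorem exists_gcd_eq_one_not_dvd_sub_add {n a3 : ℤ} {q2 : ℕ} (q3 : ℕ) (hn : ¬ 2 ∣ n)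
    (hq2 : q2 ≠ 0) (ha3 : Int.gcd a3 q3 = 1) :
    ∃ a2 : ℤ, Int.gcd a2 q2 = 1 ∧
      ∀ p : ℕ, p.Prime → p ∣ Nat.gcd q3 q2 → ¬ (p : ℤ) ∣ (n - (a3 + a2)) := by
  obtain ⟨a2, ha2, -, ha2avoid⟩ := exists_gcd_eq_one_dvd_sub_not_dvd_sub hq2 1 (c := 0)
    (fun p hp _ h => absurd (Nat.dvd_one.mp h) hp.ne_one)
    (fun p => if p ∣ q3 then n - a3 else 0)
    (by split_ifs with h; exacts [two_dvd_sub_of_gcd_eq_one hn ha3 h, dvd_zero 2])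
  refine ⟨a2, ha2, fun p hp hpg => ?_⟩
  have := ha2avoid p hp (hpg.trans (Nat.gcd_dvd_right _ _)) (hp.ne_one ∘ Nat.dvd_one.mp)
  rwa [if_pos (hpg.trans (Nat.gcd_dvd_left _ _)), dvd_sub_comm, sub_sub] at this

theorem exists_gcd_eq_one_dvd_sub_add_add {n a2 a3 : ℤ} {q1 q2 q3 : ℕ} (hn : ¬ 2 ∣ n)
    (hq1 : q1 ≠ 0) (ha2 : Int.gcd a2 q2 = 1) (ha3 : Int.gcd a3 q3 = 1)
    (h23 : ∀ p : ℕ, p.Prime → p ∣ Nat.gcd q3 q2 → ¬ (p : ℤ) ∣ (n - (a3 + a2))) :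
    ∃ a1 : ℤ, Int.gcd a1 q1 = 1 ∧
      ((Nat.gcd q1 (Nat.gcd q2 q3) : ℤ) ∣ (n - (a1 + a2 + a3))) ∧
      (∀ p : ℕ, p.Prime → p ∣ Nat.gcd q1 q2 → ¬ p ∣ q3 → ¬ (p : ℤ) ∣ (n - (a1 + a2))) ∧
      (∀ p : ℕ, p.Prime → p ∣ Nat.gcd q1 q3 → ¬ p ∣ q2 → ¬ (p : ℤ) ∣ (n - (a1 + a3))) := by
  set g := Nat.gcd q1 (Nat.gcd q2 q3)
  have hg2 : g ∣ q2 := (Nat.gcd_dvd_right _ _).trans (Nat.gcd_dvd_left _ _)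
  have hg3 : g ∣ q3 := (Nat.gcd_dvd_right _ _).trans (Nat.gcd_dvd_right _ _)
  obtain ⟨a1, ha1, hga1, ha1avoid⟩ := exists_gcd_eq_one_dvd_sub_not_dvd_sub hq1 g
    (c := n - (a2 + a3))
    (fun p hp _ hpg => by
      rw [add_comm]; exact h23 p hp (Nat.dvd_gcd (hpg.trans hg3) (hpg.trans hg2)))
    (fun p => if p ∣ q2 then n - a2 else if p ∣ q3 then n - a3 else 0)
    (by
      split_ifs with h2 h3
      exacts [two_dvd_sub_of_gcd_eq_one hn ha2 h2, two_dvd_sub_of_gcd_eq_one hn ha3 h3,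
        dvd_zero 2])
  refine ⟨a1, ha1, ?_, fun p hp hp12 hp3 => ?_, fun p hp hp13 hp2 => ?_⟩
  · rwa [show n - (a1 + a2 + a3) = -(a1 - (n - (a2 + a3))) by ring, dvd_neg]
  · have := ha1avoid p hp (hp12.trans (Nat.gcd_dvd_left _ _)) (fun h => hp3 (h.trans hg3))
    rwa [if_pos (hp12.trans (Nat.gcd_dvd_right _ _)), dvd_sub_comm, sub_sub, add_comm] at this
  · have := ha1avoid p hp (hp13.trans (Nat.gcd_dvd_left _ _)) (fun h => hp2 (h.trans hg2))
    rwa [if_neg hp2, if_pos (hp13.trans (Nat.gcd_dvd_right _ _)), dvd_sub_comm, sub_sub,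
      add_comm] at this

theorem stmt18_general (n : ℤ) (hn : ¬ 2 ∣ n) (q2 q3 : ℕ) (hq2 : 1 ≤ q2)
    (a3 : ℤ) (ha3 : Int.gcd a3 q3 = 1) :
    ∃ a2 : ℤ, Int.gcd a2 q2 = 1 ∧
      (∀ p : ℕ, p.Prime → p ∣ Nat.gcd q3 q2 → ¬ (p : ℤ) ∣ (n - (a3 + a2))) ∧
      ∀ q1 : ℕ, 1 ≤ q1 →
        ∃ a1 : ℤ, Int.gcd a1 q1 = 1 ∧
          ((Nat.gcd q1 (Nat.gcd q2 q3) : ℤ) ∣ (n - (a1 + a2 + a3))) ∧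
          (∀ p : ℕ, p.Prime → p ∣ Nat.gcd q1 q2 → ¬ p ∣ q3 →
            ¬ (p : ℤ) ∣ (n - (a1 + a2))) ∧
          (∀ p : ℕ, p.Prime → p ∣ Nat.gcd q1 q3 → ¬ p ∣ q2 →
            ¬ (p : ℤ) ∣ (n - (a1 + a3))) := by
  obtain ⟨a2, ha2, h23⟩ :=
    exists_gcd_eq_one_not_dvd_sub_add q3 hn (Nat.one_le_iff_ne_zero.mp hq2) ha3
  exact ⟨a2, ha2, h23, fun q1 hq1 =>
    exists_gcd_eq_one_dvd_sub_add_add hn (Nat.one_le_iff_ne_zero.mp hq1) ha2 ha3 h23⟩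

theorem stmt18 (n : ℤ) (hn : ¬ 2 ∣ n) (q2 q3 : ℕ) (hq2 : 1 ≤ q2) (hq3 : 1 ≤ q3)
    (a3 : ℤ) (ha3 : Int.gcd a3 q3 = 1) :
    ∃ a2 : ℤ, Int.gcd a2 q2 = 1 ∧
      (∀ p : ℕ, p.Prime → p ∣ Nat.gcd q3 q2 → ¬ (p : ℤ) ∣ (n - (a3 + a2))) ∧
      ∀ q1 : ℕ, 1 ≤ q1 →
        ∃ a1 : ℤ, Int.gcd a1 q1 = 1 ∧
          ((Nat.gcd q1 (Nat.gcd q2 q3) : ℤ) ∣ (n - (a1 + a2 + a3))) ∧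
          (∀ p : ℕ, p.Prime → p ∣ Nat.gcd q1 q2 → ¬ p ∣ q3 →
            ¬ (p : ℤ) ∣ (n - (a1 + a2))) ∧
          (∀ p : ℕ, p.Prime → p ∣ Nat.gcd q1 q3 → ¬ p ∣ q2 →
            ¬ (p : ℤ) ∣ (n - (a1 + a3))) :=
  stmt18_general n hn q2 q3 hq2 a3 ha3
end
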